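/- For z ∈ (-1,1), the function g(z) = x̄(z) - z is strictly decreasing, where x̄(z) = (1/M(z)) ∫_{-1}^{z} 2x√(1-x²) dx and M(z) = ∫_{-1}^{z} 2√(1-x²) dx. In particular, its derivative satisfies g'(z) = 3·(x̄(z)² - z·x̄(z))/(1-z²) - 1 ≤ -1/4 < 0. -/

import Mathlib

/-!
The moment `∫_{-1}^z 2x√(1-x²) dx` has the closed form `-(2/3)(1-z²)^{3/2}`, so differentiating
the quotient defining `x̄` gives `x̄' = 3x̄(x̄ - z)/(1-z²)`. The density `√(1-x²)` is larger to the
right of the midpoint `(z-1)/2 ≤ 0` of `[-1, z]` than symmetrically to its left, so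
`(z-1)/2 ≤ x̄(z) ≤ 0`. On that range `4x̄(x̄ - z) - (1-z²) = (2x̄ - z + 1)(2x̄ - z - 1) ≤ 0`,
which is the bound `x̄' ≤ 3/4`.
-/

open Real intervalIntegral Set

/-- Area of the portion of the unit disk with first coordinate at most `z`. -/
noncomputable def diskMass (z : ℝ) : ℝ := ∫ x in (-1 : ℝ)..z, 2 * Real.sqrt (1 - x ^ 2)

/-- `x`-coordinate of the centroid of the portion of the unit disk with `x ≤ z`. -/
noncomputable def diskCentroid (z : ℝ) : ℝ :=
  (∫ x in (-1 : ℝ)..z, 2 * x * Real.sqrt (1 - x ^ 2)) / diskMass z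

/-- Moment of inertia about its centroid of the portion of the unit disk with `x ≤ z`. -/
noncomputable def diskInertia (z : ℝ) : ℝ :=
  ∫ x in (-1 : ℝ)..z, ∫ y in (-Real.sqrt (1 - x ^ 2))..Real.sqrt (1 - x ^ 2),
    (y ^ 2 + (x - diskCentroid z) ^ 2)

theorem integral_sub_mul_eq_integral_mul_sub {f : ℝ → ℝ} (hf : Continuous f) (m w : ℝ) :
    ∫ x in m - w..m + w, (x - m) * f x = ∫ u in (0 : ℝ)..w, u * (f (m + u) - f (m - u)) := by
  have hg : Continuous fun u => u * f (m + u) := by fun_prop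
  calc ∫ x in m - w..m + w, (x - m) * f x
      = ∫ u in -w..w, u * f (m + u) := by
        rw [sub_eq_add_neg m w, ← integral_comp_add_left (fun x => (x - m) * f x) m]
        simp only [add_sub_cancel_left]
    _ = (∫ u in (0 : ℝ)..w, -u * f (m + -u)) + ∫ u in (0 : ℝ)..w, u * f (m + u) := by
        rw [← integral_add_adjacent_intervals (hg.intervalIntegrable _ 0)
          (hg.intervalIntegrable _ _), integral_comp_neg (fun u => u * f (m + u)), neg_zero]
    _ = ∫ u in (0 : ℝ)..w, u * (f (m + u) - f (m - u)) := by
        have hg_neg : Continuous fun u => -u * f (m + -u) := by fun_prop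
        rw [← integral_add (hg_neg.intervalIntegrable _ _) (hg.intervalIntegrable _ _)]
        simp only [← sub_eq_add_neg]
        congr 1 with u
        ring

theorem mul_integral_le_integral_mul_of_reflect_le {ρ : ℝ → ℝ} (hρ : Continuous ρ) {m w : ℝ}
    (hw : 0 ≤ w) (hreflect : ∀ u ∈ Icc 0 w, ρ (m - u) ≤ ρ (m + u)) :
    m * ∫ x in m - w..m + w, ρ x ≤ ∫ x in m - w..m + w, x * ρ x := by
  have hsub : (∫ x in m - w..m + w, x * ρ x) - m * ∫ x in m - w..m + w, ρ x
      = ∫ x in m - w..m + w, (x - m) * ρ x := by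
    have hmoment : IntervalIntegrable (fun x => x * ρ x) MeasureTheory.volume (m - w) (m + w) :=
      (continuous_id.mul hρ).intervalIntegrable _ _
    have hmass : IntervalIntegrable (fun x => m * ρ x) MeasureTheory.volume (m - w) (m + w) :=
      (continuous_const.mul hρ).intervalIntegrable _ _
    simp only [sub_mul]
    rw [integral_sub hmoment hmass, integral_const_mul]
  have hnonneg : 0 ≤ ∫ x in m - w..m + w, (x - m) * ρ x := by
    rw [integral_sub_mul_eq_integral_mul_sub hρ]
    exact integral_nonneg hw fun u hu => mul_nonneg hu.1 (sub_nonneg.2 (hreflect u hu))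
  linarith

theorem continuous_sqrt_one_sub_sq : Continuous fun x : ℝ => √(1 - x ^ 2) := by fun_prop

theorem diskMass_pos {z : ℝ} (hz : z ∈ Ioc (-1) 1) : 0 < diskMass z := by
  refine intervalIntegral_pos_of_pos_on
    ((continuous_const.mul continuous_sqrt_one_sub_sq).intervalIntegrable _ _) (fun x hx => ?_) hz.1
  have : 0 < 1 - x ^ 2 := by nlinarith [hx.1, hx.2, hz.2]
  positivity

theorem hasDerivAt_sqrt_one_sub_sq_pow_three {x : ℝ} (hx : x ^ 2 < 1) :
    HasDerivAt (fun x => √(1 - x ^ 2) ^ 3) (-3 * x * √(1 - x ^ 2)) x := by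
  have hpos : 0 < 1 - x ^ 2 := by linarith
  refine ((((hasDerivAt_pow 2 x).const_sub 1).sqrt hpos.ne').fun_pow 3).congr_deriv ?_
  field_simp
  rw [Real.sq_sqrt hpos.le]
  push_cast
  ring

theorem integral_two_mul_mul_sqrt_one_sub_sq {z : ℝ} (hz : z ∈ Icc (-1) 1) :
    ∫ x in (-1 : ℝ)..z, 2 * x * √(1 - x ^ 2) = -(2 / 3) * √(1 - z ^ 2) ^ 3 := by
  have hderiv : ∀ x ∈ Ioo (-1 : ℝ) z,
      HasDerivAt (fun x => -(2 / 3) * √(1 - x ^ 2) ^ 3) (2 * x * √(1 - x ^ 2)) x := by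
    intro x hx
    have hx2 : x ^ 2 < 1 := by nlinarith [hx.1, hx.2, hz.2]
    exact ((hasDerivAt_sqrt_one_sub_sq_pow_three hx2).const_mul (-(2 / 3))).congr_deriv (by ring)
  rw [integral_eq_sub_of_hasDerivAt_of_le hz.1 (by fun_prop) hderiv
    (((continuous_const.mul continuous_id).mul continuous_sqrt_one_sub_sq).intervalIntegrable _ _)]
  norm_num

theorem diskCentroid_eq {z : ℝ} (hz : z ∈ Icc (-1) 1) :
    diskCentroid z = -(2 / 3) * √(1 - z ^ 2) ^ 3 / diskMass z := by
  rw [diskCentroid, integral_two_mul_mul_sqrt_one_sub_sq hz]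

theorem diskCentroid_nonpos {z : ℝ} (hz : z ∈ Ioc (-1) 1) : diskCentroid z ≤ 0 := by
  rw [diskCentroid_eq (Ioc_subset_Icc_self hz)]
  have hcube := pow_nonneg (Real.sqrt_nonneg (1 - z ^ 2)) 3
  exact div_nonpos_of_nonpos_of_nonneg (by linarith) (diskMass_pos hz).le

theorem sub_one_div_two_le_diskCentroid {z : ℝ} (hz : z ∈ Ioc (-1) 1) :
    (z - 1) / 2 ≤ diskCentroid z := by
  have hreflect : ∀ u ∈ Icc 0 ((z + 1) / 2),
      2 * √(1 - ((z - 1) / 2 - u) ^ 2) ≤ 2 * √(1 - ((z - 1) / 2 + u) ^ 2) := by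
    intro u hu
    gcongr 2 * √?_
    nlinarith [hu.1, hz.2]
  have h := mul_integral_le_integral_mul_of_reflect_le (ρ := fun x => 2 * √(1 - x ^ 2))
    (continuous_const.mul continuous_sqrt_one_sub_sq)
    (by linarith [hz.1] : (0 : ℝ) ≤ (z + 1) / 2) hreflect
  rw [show (z - 1) / 2 - (z + 1) / 2 = -1 by ring, show (z - 1) / 2 + (z + 1) / 2 = z by ring]
    at h
  rw [diskCentroid, le_div_iff₀ (diskMass_pos hz), diskMass]
  have hintegrand : (fun x : ℝ => 2 * x * √(1 - x ^ 2)) = fun x => x * (2 * √(1 - x ^ 2)) :=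
    funext fun x => by ring
  rwa [hintegrand]

theorem hasDerivAt_diskCentroid {z : ℝ} (hz : z ∈ Ioo (-1) 1) :
    HasDerivAt diskCentroid (3 * (diskCentroid z ^ 2 - z * diskCentroid z) / (1 - z ^ 2)) z := by
  have hM := diskMass_pos (Ioo_subset_Ioc_self hz)
  have hpos : 0 < 1 - z ^ 2 := by nlinarith [hz.1, hz.2]
  have hmoment := ((by fun_prop : Continuous fun x : ℝ => 2 * x * √(1 - x ^ 2))
    |>.integral_hasStrictDerivAt (-1) z).hasDerivAt
  have hmass : HasDerivAt diskMass (2 * √(1 - z ^ 2)) z :=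
    ((continuous_const.mul continuous_sqrt_one_sub_sq).integral_hasStrictDerivAt (-1) z).hasDerivAt
  refine (hmoment.div hmass hM.ne').congr_deriv ?_
  rw [diskCentroid_eq (Ioo_subset_Icc_self hz),
    integral_two_mul_mul_sqrt_one_sub_sq (Ioo_subset_Icc_self hz)]
  have hsq : √(1 - z ^ 2) ^ 2 = 1 - z ^ 2 := Real.sq_sqrt hpos.le
  generalize √(1 - z ^ 2) = s at hsq ⊢
  rw [← hsq]
  field_simp
  ring

theorem three_mul_sq_sub_mul_div_sub_one_le {c z : ℝ} (hlow : z - 1 ≤ 2 * c)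
    (hup : 2 * c ≤ z + 1) (hz : 0 < 1 - z ^ 2) :
    3 * (c ^ 2 - z * c) / (1 - z ^ 2) - 1 ≤ -(1 / 4) := by
  rw [sub_le_iff_le_add, div_le_iff₀ hz]
  nlinarith [mul_nonneg (sub_nonneg.2 hlow) (sub_nonneg.2 hup)]

/-- `g(z) = x̄(z) - z` is strictly decreasing on `(-1,1)`, with derivative
`3·(x̄(z)² - z·x̄(z))/(1-z²) - 1 ≤ -1/4 < 0`. -/
theorem diskCentroid_sub_id_strictAnti :
    StrictAntiOn (fun z => diskCentroid z - z) (Set.Ioo (-1 : ℝ) 1) ∧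
    ∀ z ∈ Set.Ioo (-1 : ℝ) 1,
      HasDerivAt (fun z => diskCentroid z - z)
        (3 * (diskCentroid z ^ 2 - z * diskCentroid z) / (1 - z ^ 2) - 1) z ∧
      3 * (diskCentroid z ^ 2 - z * diskCentroid z) / (1 - z ^ 2) - 1 ≤ -(1 / 4) := by
  have hderiv : ∀ z ∈ Ioo (-1 : ℝ) 1, HasDerivAt (fun z => diskCentroid z - z)
      (3 * (diskCentroid z ^ 2 - z * diskCentroid z) / (1 - z ^ 2) - 1) z :=
    fun z hz => (hasDerivAt_diskCentroid hz).sub (hasDerivAt_id z)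
  have hbound : ∀ z ∈ Ioo (-1 : ℝ) 1,
      3 * (diskCentroid z ^ 2 - z * diskCentroid z) / (1 - z ^ 2) - 1 ≤ -(1 / 4) := by
    intro z hz
    have hz' := Ioo_subset_Ioc_self hz
    exact three_mul_sq_sub_mul_div_sub_one_le
      (by linarith [sub_one_div_two_le_diskCentroid hz'])
      (by linarith [diskCentroid_nonpos hz', hz.1]) (by nlinarith [hz.1, hz.2])
  refine ⟨strictAntiOn_of_hasDerivWithinAt_neg (convex_Ioo _ _)
    (f' := fun z => 3 * (diskCentroid z ^ 2 - z * diskCentroid z) / (1 - z ^ 2) - 1)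
    (fun z hz => (hderiv z hz).continuousAt.continuousWithinAt) ?_ ?_,
    fun z hz => ⟨hderiv z hz, hbound z hz⟩⟩
  · rw [interior_Ioo]
    exact fun z hz => (hderiv z hz).hasDerivWithinAt
  · rw [interior_Ioo]
    exact fun z hz => by linarith [hbound z hz]
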